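/- Let $F$ be a graph and $u \in V(F)$ a vertex of minimum degree, i.e., $d_F(u) = \delta(F)$. Let $\mathcal{F}_u$ be the set of minimal subgraphs $F' \subseteq F$ with $u \in V(F')$ and $e_{F'}/(v_{F'}-1) = m_1(F)$. Then $|\mathcal{F}_u| \le 1$. -/

import Mathlib

/-- The 1-density `e_H / (v_H - 1)` of a subgraph. -/
noncomputable def subDensity {V : Type*} {F : SimpleGraph V} (H : F.Subgraph) : ℝ :=
  (H.edgeSet.ncard : ℝ) / ((H.verts.ncard : ℝ) - 1)

/-- `m₁(F) = max { e_{F'}/(v_{F'}-1) : F' ⊆ F, v_{F'} ≥ 2 }`. -/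
noncomputable def m1 {V : Type*} (F : SimpleGraph V) : ℝ :=
  sSup {d : ℝ | ∃ H : F.Subgraph, 2 ≤ H.verts.ncard ∧ d = subDensity H}

/-!
Put `m = m₁(F)` and `K = F₁ ⊓ F₂`; by minimality it suffices to show that `K` has density `m`.
If `F₁` and `F₂` share at least two vertices, this is supermodularity: `e` is additive over
`⊔`/`⊓` just like `v - 1`, and both `F₁ ⊔ F₂` and `K` have density at most `m`, so both attain it.
Otherwise they share only `u`. Deleting `u` from a subgraph of density `m` leaves density at most
`m` on one vertex fewer, so each `Fᵢ` has at least `m` edges at `u`, and these edge sets are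
disjoint; hence `δ(F) = d(u) ≥ 2m`. But `δ(F) ≤ 2e(F)/v(F) ≤ 2m(v(F) - 1)/v(F) < 2m` when `m > 0`,
while for `m = 0` the one-vertex graph `K` has density `0 / 0 = 0 = m`.
-/

open SimpleGraph

namespace SimpleGraph.Subgraph

variable {V : Type*} {F : SimpleGraph V}

lemma edgeSet_eq_empty_of_ncard_verts_le_one [Finite V] {H : F.Subgraph}
    (h : H.verts.ncard ≤ 1) : H.edgeSet = ∅ := by
  refine Set.eq_empty_of_forall_notMem fun e he => ?_
  induction e using Sym2.ind with
  | _ a b => exact he.ne ((Set.ncard_le_one_iff).mp h he.fst_mem he.snd_mem)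

lemma edgeSet_deleteVerts_singleton (H : F.Subgraph) (u : V) :
    (H.deleteVerts {u}).edgeSet = H.edgeSet \ F.incidenceSet u := by
  ext e
  induction e using Sym2.ind with
  | _ a b =>
    simp only [Set.mem_sdiff, Subgraph.mem_edgeSet, deleteVerts_adj, SimpleGraph.incidenceSet,
      Set.mem_ofPred_eq, Sym2.mem_iff, Set.mem_singleton_iff]
    constructor
    · rintro ⟨-, hau, -, hbu, hab⟩
      exact ⟨hab, fun h => h.2.elim (fun h => hau h.symm) (fun h => hbu h.symm)⟩
    · rintro ⟨hab, hu⟩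
      exact ⟨hab.fst_mem, fun h => hu ⟨hab.adj_sub, .inl h.symm⟩, hab.snd_mem,
        fun h => hu ⟨hab.adj_sub, .inr h.symm⟩, hab⟩

lemma ncard_edgeSet_inter_incidenceSet_add_le_degree [Fintype V] [DecidableRel F.Adj]
    {H₁ H₂ : F.Subgraph} {u : V} (h : H₁.verts ∩ H₂.verts ⊆ {u}) :
    (H₁.edgeSet ∩ F.incidenceSet u).ncard + (H₂.edgeSet ∩ F.incidenceSet u).ncard
      ≤ F.degree u := by
  classical
  have hdisj : Disjoint (H₁.edgeSet ∩ F.incidenceSet u) (H₂.edgeSet ∩ F.incidenceSet u) := by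
    refine Set.disjoint_left.mpr fun e he₁ he₂ => ?_
    induction e using Sym2.ind with
    | _ a b =>
      obtain ⟨h₁ : H₁.Adj a b, -, hu⟩ := he₁
      have h₂ : H₂.Adj a b := he₂.1
      have ha : a = u := h ⟨h₁.fst_mem, h₂.fst_mem⟩
      have hb : b = u := h ⟨h₁.snd_mem, h₂.snd_mem⟩
      exact h₁.ne (ha.trans hb.symm)
  rw [← Set.ncard_union_eq hdisj, ← card_incidenceSet_eq_degree, ← Nat.card_eq_fintype_card,
    Nat.card_coe_set_eq]
  exact Set.ncard_le_ncard (Set.union_subset Set.inter_subset_right Set.inter_subset_right)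

end SimpleGraph.Subgraph

open SimpleGraph.Subgraph

section Density

variable {V : Type*} {F : SimpleGraph V}

/-- The junk value of the division by `v_H - 1 = 0`. -/
lemma subDensity_eq_zero_of_ncard_verts_eq_one {H : F.Subgraph} (h : H.verts.ncard = 1) :
    subDensity H = 0 := by
  simp [subDensity, h]

lemma subDensity_eq_iff {H : F.Subgraph} (h : 2 ≤ H.verts.ncard) {d : ℝ} :
    subDensity H = d ↔ (H.edgeSet.ncard : ℝ) = d * ((H.verts.ncard : ℝ) - 1) := by
  have h' : (2 : ℝ) ≤ H.verts.ncard := by exact_mod_cast h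
  exact div_eq_iff (by linarith)

lemma m1_nonneg (F : SimpleGraph V) : 0 ≤ m1 F := by
  refine Real.sSup_nonneg ?_
  rintro _ ⟨H, h, rfl⟩
  have h' : (2 : ℝ) ≤ H.verts.ncard := by exact_mod_cast h
  exact div_nonneg (Nat.cast_nonneg _) (by linarith)

variable [Finite V]

lemma subDensity_le_m1 {H : F.Subgraph} (h : 2 ≤ H.verts.ncard) : subDensity H ≤ m1 F := by
  refine le_csSup ((Set.finite_range (subDensity (F := F))).subset ?_).bddAbove ⟨H, h, rfl⟩
  rintro _ ⟨H', -, rfl⟩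
  exact ⟨H', rfl⟩

lemma ncard_edgeSet_le_m1_mul {H : F.Subgraph} (h : H.verts.Nonempty) :
    (H.edgeSet.ncard : ℝ) ≤ m1 F * ((H.verts.ncard : ℝ) - 1) := by
  rcases Nat.lt_or_ge 1 H.verts.ncard with h2 | h1
  · have h' : (1 : ℝ) < H.verts.ncard := by exact_mod_cast h2
    exact (div_le_iff₀ (by linarith)).mp (subDensity_le_m1 h2)
  · have hv : H.verts.ncard = 1 := le_antisymm h1 (h.ncard_pos)
    simp [edgeSet_eq_empty_of_ncard_verts_le_one h1, hv]

/-- Supermodularity of the edge count against the modularity of `v - 1`. -/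
lemma subDensity_inf_eq_m1 {H₁ H₂ : F.Subgraph} (h₁ : subDensity H₁ = m1 F)
    (h₂ : subDensity H₂ = m1 F) (h : 2 ≤ (H₁.verts ∩ H₂.verts).ncard) :
    subDensity (H₁ ⊓ H₂) = m1 F := by
  have hv₁ : 2 ≤ H₁.verts.ncard := h.trans (Set.ncard_le_ncard Set.inter_subset_left)
  have hv₂ : 2 ≤ H₂.verts.ncard := h.trans (Set.ncard_le_ncard Set.inter_subset_right)
  have he₁ := (subDensity_eq_iff hv₁).mp h₁
  have he₂ := (subDensity_eq_iff hv₂).mp h₂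
  have hne : (H₁.verts ∩ H₂.verts).Nonempty := Set.nonempty_of_ncard_ne_zero (by omega)
  have hsup := ncard_edgeSet_le_m1_mul (H := H₁ ⊔ H₂)
    (hne.mono (Set.inter_subset_left.trans Set.subset_union_left))
  have hinf := ncard_edgeSet_le_m1_mul (H := H₁ ⊓ H₂) hne
  rw [Subgraph.edgeSet_sup, verts_sup] at hsup
  rw [Subgraph.edgeSet_inf, verts_inf] at hinf
  have hv : ((H₁.verts ∩ H₂.verts).ncard : ℝ) + (H₁.verts ∪ H₂.verts).ncard
      = H₁.verts.ncard + H₂.verts.ncard := by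
    exact_mod_cast Set.ncard_inter_add_ncard_union H₁.verts H₂.verts
  have he : ((H₁.edgeSet ∩ H₂.edgeSet).ncard : ℝ) + (H₁.edgeSet ∪ H₂.edgeSet).ncard
      = H₁.edgeSet.ncard + H₂.edgeSet.ncard := by
    exact_mod_cast Set.ncard_inter_add_ncard_union H₁.edgeSet H₂.edgeSet
  rw [subDensity_eq_iff (by rwa [verts_inf]), Subgraph.edgeSet_inf, verts_inf]
  linarith [congrArg (m1 F * ·) hv]

lemma m1_le_ncard_edgeSet_inter_incidenceSet {H : F.Subgraph} {u : V} (hu : u ∈ H.verts)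
    (hH : subDensity H = m1 F) : m1 F ≤ (H.edgeSet ∩ F.incidenceSet u).ncard := by
  rcases Nat.lt_or_ge 1 H.verts.ncard with h2 | h1
  · have he := (subDensity_eq_iff h2).mp hH
    have hvdel : (H.deleteVerts {u}).verts.ncard + 1 = H.verts.ncard := by
      rw [deleteVerts_verts, ← Set.ncard_singleton u,
        Set.ncard_sdiff_add_ncard_of_subset (Set.singleton_subset_iff.mpr hu)]
    have hedel : (H.edgeSet ∩ F.incidenceSet u).ncard + (H.deleteVerts {u}).edgeSet.ncard
        = H.edgeSet.ncard := by
      rw [edgeSet_deleteVerts_singleton, Set.ncard_inter_add_ncard_sdiff_eq_ncard]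
    have hdel := ncard_edgeSet_le_m1_mul (H := H.deleteVerts {u})
      (Set.nonempty_of_ncard_ne_zero (by omega))
    have hvdel' : ((H.deleteVerts {u}).verts.ncard : ℝ) + 1 = H.verts.ncard := by
      exact_mod_cast hvdel
    have hedel' : ((H.edgeSet ∩ F.incidenceSet u).ncard : ℝ)
        + (H.deleteVerts {u}).edgeSet.ncard = H.edgeSet.ncard := by
      exact_mod_cast hedel
    linarith [congrArg (m1 F * ·) hvdel']
  · have hv : H.verts.ncard = 1 := le_antisymm h1 ((Set.ncard_pos).mpr ⟨u, hu⟩)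
    rw [← hH, subDensity_eq_zero_of_ncard_verts_eq_one hv]
    exact Nat.cast_nonneg _

end Density

/-- `v · δ ≤ 2e ≤ 2m₁ (v - 1) < 2m₁ v`. -/
lemma minDegree_lt_two_mul_m1 {V : Type*} [Fintype V] [Nonempty V] {F : SimpleGraph V}
    [DecidableRel F.Adj] (hm : 0 < m1 F) : (F.minDegree : ℝ) < 2 * m1 F := by
  classical
  have hdeg : Fintype.card V * F.minDegree ≤ 2 * F.edgeSet.ncard := by
    rw [Set.ncard_eq_toFinset_card', Set.toFinset_card, card_edgeSet,
      ← sum_degrees_eq_twice_card_edges]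
    calc Fintype.card V * F.minDegree = ∑ _v : V, F.minDegree := by simp
      _ ≤ ∑ v, F.degree v := Finset.sum_le_sum fun v _ => F.minDegree_le_degree v
  have hedge := ncard_edgeSet_le_m1_mul (H := (⊤ : F.Subgraph)) Set.univ_nonempty
  rw [Subgraph.edgeSet_top, verts_top, Set.ncard_univ, Nat.card_eq_fintype_card] at hedge
  have hdeg' : (Fintype.card V : ℝ) * F.minDegree ≤ 2 * F.edgeSet.ncard := by
    exact_mod_cast hdeg
  have hn : (0 : ℝ) < Fintype.card V := by exact_mod_cast Fintype.card_pos
  nlinarith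

lemma two_mul_m1_le_degree {V : Type*} [Fintype V] {F : SimpleGraph V} [DecidableRel F.Adj]
    {H₁ H₂ : F.Subgraph} {u : V} (h₁u : u ∈ H₁.verts) (h₁ : subDensity H₁ = m1 F)
    (h₂u : u ∈ H₂.verts) (h₂ : subDensity H₂ = m1 F) (h : H₁.verts ∩ H₂.verts ⊆ {u}) :
    2 * m1 F ≤ F.degree u := by
  have hdeg : ((H₁.edgeSet ∩ F.incidenceSet u).ncard : ℝ)
      + (H₂.edgeSet ∩ F.incidenceSet u).ncard ≤ F.degree u := by
    exact_mod_cast ncard_edgeSet_inter_incidenceSet_add_le_degree h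
  linarith [m1_le_ncard_edgeSet_inter_incidenceSet h₁u h₁,
    m1_le_ncard_edgeSet_inter_incidenceSet h₂u h₂]

/-- if `u` is a vertex of minimum degree of `F`, then there is at most one
minimal (under inclusion) subgraph of `F` containing `u` whose 1-density equals `m₁(F)`:
any two such subgraphs coincide. -/
theorem minimal_densest_subgraph_unique_at_min_degree_vertex
    {V : Type*} [Fintype V] (F : SimpleGraph V) [DecidableRel F.Adj] (u : V)
    (hu : F.degree u = F.minDegree)
    (F1 F2 : F.Subgraph)
    (h1u : u ∈ F1.verts) (h1d : subDensity F1 = m1 F)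
    (h1min : ∀ H : F.Subgraph, u ∈ H.verts → subDensity H = m1 F → H ≤ F1 → H = F1)
    (h2u : u ∈ F2.verts) (h2d : subDensity F2 = m1 F)
    (h2min : ∀ H : F.Subgraph, u ∈ H.verts → subDensity H = m1 F → H ≤ F2 → H = F2) :
    F1 = F2 := by
  have hKu : u ∈ (F1 ⊓ F2).verts := ⟨h1u, h2u⟩
  suffices hK : subDensity (F1 ⊓ F2) = m1 F from
    (h1min _ hKu hK inf_le_left).symm.trans (h2min _ hKu hK inf_le_right)
  rcases Nat.lt_or_ge 1 (F1.verts ∩ F2.verts).ncard with h2 | h1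
  · exact subDensity_inf_eq_m1 h1d h2d h2
  rcases (m1_nonneg F).eq_or_lt with hm | hm
  · rw [← hm]
    exact subDensity_eq_zero_of_ncard_verts_eq_one (le_antisymm h1 ((Set.ncard_pos).mpr ⟨u, hKu⟩))
  · have hmeet : F1.verts ∩ F2.verts ⊆ {u} := fun v hv => (Set.ncard_le_one_iff).mp h1 hv hKu
    have : Nonempty V := ⟨u⟩
    exact absurd (hu ▸ two_mul_m1_le_degree h1u h1d h2u h2d hmeet)
      (minDegree_lt_two_mul_m1 hm).not_ge
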